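/- Let a ∈ S(0,∞) and let x belong to the orbit of a for the pair (L₀(0,∞), L∞(0,∞)), i.e. x = Ta for some additive map T on measurable functions which is bounded from L₀ to L₀ and from L∞ to L∞. Let c = ‖x‖_orb be the infimum, over all such T with Ta = x, of max(‖T‖_{L₀→L₀}, ‖T‖_{L∞→L∞}), and assume c > 0. Then for every t > 0, μ(t; x) ≤ c·μ(t/c; a). -/

import Mathlib

open MeasureTheory Filter Set
open scoped ENNReal NNReal

/-- Lebesgue measure on `(0, ∞)`. -/
noncomputable def mLeb : Measure ℝ := volume.restrict (Set.Ioi (0:ℝ))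

/-- The distribution function `d_f(s) = m {t ∈ (0,∞) : |f t| > s}`. -/
noncomputable def distFun (f : ℝ → ℝ) (s : ℝ) : ℝ≥0∞ := mLeb {t | s < |f t|}

/-- `f ∈ S(0,∞)`: `f` is measurable and `d_f(s) < ∞` for some `s > 0`. -/
def MemS (f : ℝ → ℝ) : Prop := Measurable f ∧ ∃ s > (0:ℝ), distFun f s < ⊤

/-- `‖g‖₀ = m (supp g)`, the `L₀`-group-norm. -/
noncomputable def norm0 (g : ℝ → ℝ) : ℝ≥0∞ := mLeb (Function.support g)

/-- `‖h‖∞`, the essential supremum norm on `(0,∞)`. -/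
noncomputable def normInf (h : ℝ → ℝ) : ℝ≥0∞ := eLpNorm h ⊤ mLeb

/-- `g ∈ L₀(0,∞)`: measurable with support of finite measure. -/
def MemL0 (g : ℝ → ℝ) : Prop := Measurable g ∧ norm0 g < ⊤

/-- `h ∈ L∞(0,∞)`: measurable and essentially bounded. -/
def MemLinf (h : ℝ → ℝ) : Prop := Measurable h ∧ normInf h < ⊤

/-- The K-functional `K_u(f) = inf {‖g‖₀ + u‖h‖∞ : f = g + h, g ∈ L₀, h ∈ L∞}`. -/
noncomputable def Kfun (u : ℝ) (f : ℝ → ℝ) : ℝ≥0∞ :=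
  ⨅ (g : ℝ → ℝ) (h : ℝ → ℝ) (_ : MemL0 g) (_ : MemLinf h) (_ : f = g + h),
    norm0 g + ENNReal.ofReal u * normInf h

/-- The decreasing rearrangement `μ(t; f) = inf {s ≥ 0 : d_f(s) ≤ t}`. -/
noncomputable def rearr (f : ℝ → ℝ) (t : ℝ) : ℝ :=
  sInf {s : ℝ | 0 ≤ s ∧ distFun f s ≤ ENNReal.ofReal t}

/-- The Δ-norm `‖f‖_S = inf_{s>0} [s + d_f(s)]`. -/
noncomputable def normS (f : ℝ → ℝ) : ℝ≥0∞ :=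
  ⨅ (s : ℝ) (_ : 0 < s), ENNReal.ofReal s + distFun f s

/-- `T` is an additive map, mapping measurable functions to measurable functions,
whose `L₀ → L₀` and `L∞ → L∞` norms are both bounded by `r`. -/
def IsBoundedBy (T : (ℝ → ℝ) → (ℝ → ℝ)) (r : ℝ) : Prop :=
  (∀ f g : ℝ → ℝ, T (f + g) = T f + T g) ∧
  (∀ f : ℝ → ℝ, Measurable f → Measurable (T f)) ∧
  (∀ f : ℝ → ℝ, MemL0 f → norm0 (T f) ≤ ENNReal.ofReal r * norm0 f) ∧
  (∀ f : ℝ → ℝ, MemLinf f → normInf (T f) ≤ ENNReal.ofReal r * normInf f)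

/-!
Cutting `a` at height `s` writes it as a part supported on `{|a| > s}`, of `L₀`-norm at most
`d_a(s)`, plus a part bounded by `s`. Applying an admissible `T` with bound `r` and using
additivity, `x = T a` exceeds `r s` only on the support of the image of the first part (up to a
null set), so `d_x(r s) ≤ r d_a(s)`. Every `r > c` is admissible, and letting `r ↓ c` gives
`d_x(u) ≤ c d_a(s)` for all `u > c s`; inverting distribution functions yields the bound on
rearrangements.
-/

open scoped Topology

lemma distFun_antitone (f : ℝ → ℝ) : Antitone (distFun f) :=
  fun _ _ h => measure_mono fun _ hτ => lt_of_le_of_lt h hτ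

lemma tendsto_distFun_atTop {f : ℝ → ℝ} (hf : MemS f) :
    Tendsto (distFun f) atTop (𝓝 0) := by
  obtain ⟨hmeas, s₀, -, hfin⟩ := hf
  have hempty : ⋂ s : ℝ, {τ : ℝ | s < |f τ|} = ∅ :=
    eq_empty_of_forall_notMem fun τ hτ => (lt_irrefl |f τ|) (mem_iInter.1 hτ |f τ|)
  have := tendsto_measure_iInter_atTop (μ := mLeb) (s := fun s => {τ | s < |f τ|})
    (fun s => (measurableSet_lt measurable_const hmeas.abs).nullMeasurableSet)
    (fun _ _ h _ hτ => lt_of_le_of_lt h hτ) ⟨s₀, hfin.ne⟩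
  rwa [hempty, measure_empty] at this

lemma exists_distFun_le {f : ℝ → ℝ} (hf : MemS f) {u : ℝ} (hu : 0 < u) :
    ∃ s, 0 ≤ s ∧ distFun f s ≤ ENNReal.ofReal u := by
  have hsmall := (tendsto_distFun_atTop hf).eventually
    (Iic_mem_nhds (ENNReal.ofReal_pos.2 hu))
  exact ((eventually_ge_atTop 0).and hsmall).exists

lemma rearr_le_of_forall_lt {f : ℝ → ℝ} {t u : ℝ} (hu : 0 ≤ u)
    (h : ∀ v, u < v → distFun f v ≤ ENNReal.ofReal t) : rearr f t ≤ u :=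
  le_of_forall_gt_imp_ge_of_dense fun v huv =>
    csInf_le ⟨0, fun _ hs => hs.1⟩ ⟨hu.trans huv.le, h v huv⟩

lemma normInf_le_of_abs_le {h : ℝ → ℝ} {s : ℝ} (hh : ∀ τ, |h τ| ≤ s) :
    normInf h ≤ ENNReal.ofReal s := by
  rw [normInf, eLpNorm_exponent_top]
  exact eLpNormEssSup_le_of_ae_bound (ae_of_all _ hh)

lemma distFun_add_le_norm0 (g : ℝ → ℝ) {h : ℝ → ℝ} {s : ℝ} (hs : 0 ≤ s)
    (hh : normInf h ≤ ENNReal.ofReal s) : distFun (g + h) s ≤ norm0 g := by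
  have hbound : ∀ᵐ τ ∂mLeb, |h τ| ≤ s := by
    filter_upwards [ae_le_eLpNormEssSup (f := h) (μ := mLeb)] with τ hτ
    rw [normInf, eLpNorm_exponent_top] at hh
    rw [← ENNReal.ofReal_le_ofReal_iff hs, ← Real.enorm_eq_ofReal_abs]
    exact hτ.trans hh
  have hsub : {τ | s < |(g + h) τ|} ⊆ Function.support g ∪ {τ | s < |h τ|} := by
    intro τ hτ
    by_cases hg : g τ = 0
    · right; simpa [hg] using hτ
    · exact Or.inl hg
  calc distFun (g + h) s ≤ mLeb (Function.support g ∪ {τ | s < |h τ|}) := measure_mono hsub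
    _ ≤ norm0 g + mLeb {τ | s < |h τ|} := measure_union_le _ _
    _ = norm0 g := by
      rw [ae_iff] at hbound
      simp only [not_le] at hbound
      rw [hbound, add_zero]

lemma IsBoundedBy.mono {T : (ℝ → ℝ) → (ℝ → ℝ)} {r r' : ℝ} (hT : IsBoundedBy T r)
    (hrr' : r ≤ r') : IsBoundedBy T r' := by
  obtain ⟨hadd, hmeas, h0, hinf⟩ := hT
  have hle : ENNReal.ofReal r ≤ ENNReal.ofReal r' := ENNReal.ofReal_le_ofReal hrr'
  exact ⟨hadd, hmeas, fun f hf => (h0 f hf).trans (mul_le_mul_left hle _),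
    fun f hf => (hinf f hf).trans (mul_le_mul_left hle _)⟩

lemma IsBoundedBy.distFun_le {T : (ℝ → ℝ) → (ℝ → ℝ)} {r : ℝ} (hT : IsBoundedBy T r)
    (hr : 0 ≤ r) {a : ℝ → ℝ} (ha : Measurable a) {s : ℝ} (hs : 0 ≤ s)
    (hfin : distFun a s < ⊤) :
    distFun (T a) (r * s) ≤ ENNReal.ofReal r * distFun a s := by
  obtain ⟨hadd, -, h0, hinf⟩ := hT
  set E := {τ | s < |a τ|}
  have hE : MeasurableSet E := measurableSet_lt measurable_const ha.abs
  have hlarge_norm : norm0 (E.indicator a) ≤ distFun a s :=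
    measure_mono support_indicator_subset
  have hlarge : MemL0 (E.indicator a) := ⟨ha.indicator hE, hlarge_norm.trans_lt hfin⟩
  have hsmall_norm : normInf (Eᶜ.indicator a) ≤ ENNReal.ofReal s := by
    refine normInf_le_of_abs_le fun τ => ?_
    by_cases hτ : τ ∈ E
    · simpa [indicator_of_notMem (notMem_compl_iff.2 hτ)] using hs
    · simpa [indicator_of_mem (mem_compl hτ), E] using hτ
  have hsmall : MemLinf (Eᶜ.indicator a) :=
    ⟨ha.indicator hE.compl, hsmall_norm.trans_lt ENNReal.ofReal_lt_top⟩
  have hT_small : normInf (T (Eᶜ.indicator a)) ≤ ENNReal.ofReal (r * s) := by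
    rw [ENNReal.ofReal_mul hr]
    exact (hinf _ hsmall).trans (by gcongr)
  calc distFun (T a) (r * s)
      = distFun (T (E.indicator a) + T (Eᶜ.indicator a)) (r * s) := by
        rw [← hadd, indicator_self_add_compl]
    _ ≤ norm0 (T (E.indicator a)) := distFun_add_le_norm0 _ (mul_nonneg hr hs) hT_small
    _ ≤ ENNReal.ofReal r * norm0 (E.indicator a) := h0 _ hlarge
    _ ≤ ENNReal.ofReal r * distFun a s := by gcongr

lemma distFun_le_of_forall_gt_exists_isBoundedBy {a x : ℝ → ℝ} (ha : Measurable a) {c : ℝ}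
    (hc : 0 ≤ c) (horb : ∀ r > c, ∃ T, IsBoundedBy T r ∧ T a = x) {s u : ℝ} (hs : 0 ≤ s)
    (hfin : distFun a s < ⊤) (hu : c * s < u) :
    distFun x u ≤ ENNReal.ofReal c * distFun a s := by
  have hlim : Tendsto (fun r => ENNReal.ofReal r * distFun a s) (𝓝[>] c)
      (𝓝 (ENNReal.ofReal c * distFun a s)) :=
    ENNReal.Tendsto.mul_const (ENNReal.continuous_ofReal.continuousWithinAt.tendsto)
      (Or.inr hfin.ne)
  have hru : ∀ᶠ r in 𝓝[>] c, r * s < u :=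
    (tendsto_nhdsWithin_of_tendsto_nhds ((continuous_mul_const s).tendsto c)).eventually_lt_const hu
  refine ge_of_tendsto hlim ?_
  filter_upwards [self_mem_nhdsWithin, hru] with r hcr hru
  obtain ⟨T, hT, rfl⟩ := horb r hcr
  exact (distFun_antitone _ hru.le).trans (hT.distFun_le (hc.trans hcr.le) ha hs hfin)

lemma rearr_le_mul_rearr_of_forall_gt_exists_isBoundedBy {a x : ℝ → ℝ} (ha : MemS a) {c : ℝ}
    (hc : 0 < c) (horb : ∀ r > c, ∃ T, IsBoundedBy T r ∧ T a = x) {t : ℝ} (ht : 0 < t) :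
    rearr x t ≤ c * rearr a (t / c) := by
  rw [← div_le_iff₀' hc]
  obtain ⟨s₀, hs₀⟩ := exists_distFun_le ha (div_pos ht hc)
  refine le_csInf ⟨s₀, hs₀⟩ fun s ⟨hs, hsa⟩ => ?_
  rw [div_le_iff₀' hc]
  refine rearr_le_of_forall_lt (mul_nonneg hc.le hs) fun u hu => ?_
  calc distFun x u ≤ ENNReal.ofReal c * distFun a s :=
        distFun_le_of_forall_gt_exists_isBoundedBy ha.1 hc.le horb hs
          (hsa.trans_lt ENNReal.ofReal_lt_top) hu
    _ ≤ ENNReal.ofReal c * ENNReal.ofReal (t / c) := by gcongr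
    _ = ENNReal.ofReal t := by rw [← ENNReal.ofReal_mul hc.le, mul_div_cancel₀ t hc.ne']

theorem stmt8_general (a x : ℝ → ℝ) (ha : MemS a)
    (c : ℝ)
    (hc : c = sInf {r : ℝ | 0 ≤ r ∧ ∃ T : (ℝ → ℝ) → (ℝ → ℝ), IsBoundedBy T r ∧ T a = x})
    (hcpos : 0 < c) (t : ℝ) (ht : 0 < t) :
    rearr x t ≤ c * rearr a (t / c) := by
  have hne : {r : ℝ | 0 ≤ r ∧ ∃ T : (ℝ → ℝ) → (ℝ → ℝ), IsBoundedBy T r ∧ T a = x}.Nonempty := by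
    by_contra hempty
    rw [not_nonempty_iff_eq_empty.1 hempty, Real.sInf_empty] at hc
    exact hcpos.ne' hc
  refine rearr_le_mul_rearr_of_forall_gt_exists_isBoundedBy ha hcpos (fun r hr => ?_) ht
  obtain ⟨r₀, ⟨-, T, hT, hTa⟩, hr₀⟩ := exists_lt_of_csInf_lt hne (hc ▸ hr)
  exact ⟨T, hT.mono hr₀.le, hTa⟩

/-- if `x` is in the orbit of `a` for `(L₀, L∞)` and
`c = ‖x‖_orb = inf {max(‖T‖_{L₀→L₀}, ‖T‖_{L∞→L∞}) : Ta = x} > 0`,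
then `μ(t; x) ≤ c·μ(t/c; a)` for every `t > 0`. -/
theorem stmt8 (a x : ℝ → ℝ) (ha : MemS a) (hx : MemS x)
    (hne : {r : ℝ | 0 ≤ r ∧ ∃ T : (ℝ → ℝ) → (ℝ → ℝ), IsBoundedBy T r ∧ T a = x}.Nonempty)
    (c : ℝ)
    (hc : c = sInf {r : ℝ | 0 ≤ r ∧ ∃ T : (ℝ → ℝ) → (ℝ → ℝ), IsBoundedBy T r ∧ T a = x})
    (hcpos : 0 < c) (t : ℝ) (ht : 0 < t) :
    rearr x t ≤ c * rearr a (t / c) :=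
  stmt8_general a x ha c hc hcpos t ht
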